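/- Let A be a finite set of atoms with |A| = r, and let H be a graph whose vertices carry supports σ(v) ⊆ A, with adjacency given by support disjointness, such that every singleton {a} occurs as a support and exactly one vertex has empty support. For mixed demands k_1,...,k_c ≥ 2 with M = Σ(k_i−1), every c-coloring of the vertices forces a monochromatic k_i-clique in some color i if and only if r ≥ M. -/

import Mathlib

/-!
If `r ≥ M`, the vertex with empty support together with one vertex of support `{a}` for each atom
`a` form a clique on `r + 1 > M` vertices, so by pigeonhole some color `i` holds `k i` of them.

If `r < M`, send each vertex to an atom of its support, or to an extra point `∗` when the support is
empty. On a clique this map is injective: disjoint nonempty supports receive distinct atoms, and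
only one vertex has empty support. Coloring the `r + 1 ≤ M` points of `A ∪ {∗}` so that color `i`
is used at most `k i - 1` times and pulling back gives a coloring with no monochromatic
`k i`-clique in any color `i`.
-/

open Finset

theorem Fintype.exists_map_card_fiber_le_of_card_le_sum {X ι : Type*} [Fintype X] [Fintype ι]
    [DecidableEq ι] (cap : ι → ℕ) (h : Fintype.card X ≤ ∑ i, cap i) :
    ∃ F : X → ι, ∀ i, #{x | F x = i} ≤ cap i := by
  obtain ⟨e⟩ : Nonempty (X ↪ Σ i, Fin (cap i)) :=
    Function.Embedding.nonempty_of_card_le (by simpa using h)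
  refine ⟨fun x => (e x).1, fun i => ?_⟩
  calc #{x | (e x).1 = i}
      ≤ #(range (cap i)) := card_le_card_of_injOn (fun x => ((e x).2 : ℕ)) ?_ ?_
    _ = cap i := Finset.card_range _
  · intro x hx
    obtain rfl : (e x).1 = i := (mem_filter.1 hx).2
    simp
  · intro x hx y hy hxy
    have hfst : (e x).1 = (e y).1 := (mem_filter.1 hx).2.trans (mem_filter.1 hy).2.symm
    exact e.injective (Sigma.ext hfst ((Fin.heq_ext_iff (congrArg cap hfst)).2 hxy))

theorem Finset.exists_subset_card_eq_of_sum_pred_lt_card {V ι : Type*} [Fintype ι]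
    [DecidableEq ι] (W : Finset V) (χ : V → ι) (k : ι → ℕ) (h : ∑ i, (k i - 1) < #W) :
    ∃ i, ∃ S ⊆ W, #S = k i ∧ ∀ v ∈ S, χ v = i := by
  rw [card_eq_sum_card_fiberwise (f := χ) (t := univ) fun _ _ => mem_coe.2 (mem_univ _)] at h
  obtain ⟨i, -, hi⟩ := exists_lt_of_sum_lt h
  obtain ⟨S, hS, hcard⟩ := exists_subset_card_eq (show k i ≤ #{v ∈ W | χ v = i} by omega)
  exact ⟨i, S, hS.trans (filter_subset _ _), hcard, fun v hv => (mem_filter.1 (hS hv)).2⟩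

namespace SupportDisjointness

variable {α V : Type*} {A : Finset α} {σ : V → Finset α}

theorem exists_clique_card_eq_card_add_one (hsing : ∀ a ∈ A, ∃ v, σ v = {a}) {v₀ : V}
    (hv₀ : σ v₀ = ∅) :
    ∃ W : Finset V, #W = #A + 1 ∧ (W : Set V).Pairwise fun u v => Disjoint (σ u) (σ v) := by
  classical
  choose g hg using fun a : A => hsing a a.2
  have g_inj : Function.Injective g := fun a b hab =>
    Subtype.ext (singleton_injective (by rw [← hg, ← hg, hab]))
  have hv₀g : v₀ ∉ univ.map ⟨g, g_inj⟩ := by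
    simp only [mem_map, mem_univ, true_and, Function.Embedding.coeFn_mk, not_exists]
    intro a hga
    exact singleton_ne_empty (a : α) ((hg a).symm.trans (hga ▸ hv₀))
  refine ⟨insert v₀ (univ.map ⟨g, g_inj⟩), ?_, ?_⟩
  · rw [card_insert_of_notMem hv₀g, card_map, card_univ, Fintype.card_coe]
  · rw [coe_insert]
    refine Set.Pairwise.insert ?_ fun v _ _ => by simp [hv₀]
    simp only [coe_map, coe_univ, Set.image_univ, Function.Embedding.coeFn_mk]
    rintro _ ⟨a, rfl⟩ _ ⟨b, rfl⟩ hab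
    rw [hg, hg, disjoint_singleton]
    exact fun h => hab (congrArg g (Subtype.ext h))

theorem exists_injOn_of_pairwise_disjoint (hσA : ∀ v, σ v ⊆ A)
    (huniq : (σ ⁻¹' {∅}).Subsingleton) :
    ∃ p : V → Option A, ∀ S : Set V,
      S.Pairwise (fun u v => Disjoint (σ u) (σ v)) → S.InjOn p := by
  classical
  refine ⟨fun v => if h : (σ v).Nonempty then some ⟨h.choose, hσA v h.choose_spec⟩ else none,
    fun S hS u hu v hv huv => ?_⟩
  by_contra hne
  by_cases hnu : (σ u).Nonempty <;> by_cases hnv : (σ v).Nonempty <;>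
    simp only [hnu, hnv, dif_pos, dif_neg, not_false_eq_true, Option.some.injEq,
      Subtype.mk.injEq, reduceCtorEq] at huv
  · exact disjoint_left.1 (hS hu hv hne) hnu.choose_spec (huv ▸ hnv.choose_spec)
  · exact hne (huniq (not_nonempty_iff_eq_empty.1 hnu) (not_nonempty_iff_eq_empty.1 hnv))

theorem exists_coloring_clique_card_le {ι : Type*} [Fintype ι] [DecidableEq ι]
    (hσA : ∀ v, σ v ⊆ A) (huniq : (σ ⁻¹' {∅}).Subsingleton) (cap : ι → ℕ)
    (h : #A + 1 ≤ ∑ i, cap i) :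
    ∃ χ : V → ι, ∀ i (S : Finset V), (∀ v ∈ S, χ v = i) →
      (S : Set V).Pairwise (fun u v => Disjoint (σ u) (σ v)) → #S ≤ cap i := by
  obtain ⟨p, hp⟩ := exists_injOn_of_pairwise_disjoint hσA huniq
  obtain ⟨F, hF⟩ := Fintype.exists_map_card_fiber_le_of_card_le_sum (X := Option A) cap
    (by simpa using h)
  refine ⟨F ∘ p, fun i S hmono hS => (card_le_card_of_injOn p ?_ (hp _ hS)).trans (hF i)⟩
  intro v hv
  simpa using hmono v hv

end SupportDisjointness

open SupportDisjointness in
theorem support_disjointness_ramsey_one_universal_general {α V : Type*}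
    (A : Finset α) (r : ℕ) (hr : A.card = r) (σ : V → Finset α)
    (hσA : ∀ v, σ v ⊆ A) (hsing : ∀ a ∈ A, ∃ v, σ v = {a})
    (huniv : ∃! v, σ v = ∅)
    (c : ℕ) (k : Fin c → ℕ) (hk : ∀ i, 2 ≤ k i) :
    (∀ χ : V → Fin c, ∃ i : Fin c, ∃ S : Finset V, S.card = k i ∧
      (∀ v ∈ S, χ v = i) ∧
      (S : Set V).Pairwise fun u v => Disjoint (σ u) (σ v)) ↔
    ∑ i, (k i - 1) ≤ r := by
  obtain ⟨v₀, hv₀, hv₀_unique⟩ := huniv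
  subst hr
  constructor
  · intro hforce
    by_contra! hlt
    have huniq : (σ ⁻¹' {∅}).Subsingleton := fun u hu v hv =>
      (hv₀_unique u hu).trans (hv₀_unique v hv).symm
    obtain ⟨χ, hχ⟩ := exists_coloring_clique_card_le hσA huniq (fun i => k i - 1) hlt
    obtain ⟨i, S, hcard, hmono, hS⟩ := hforce χ
    have := hχ i S hmono hS
    have := hk i
    omega
  · intro hM χ
    obtain ⟨W, hWcard, hW⟩ := exists_clique_card_eq_card_add_one hsing hv₀
    obtain ⟨i, S, hSW, hcard, hmono⟩ :=
      exists_subset_card_eq_of_sum_pred_lt_card W χ k (by omega)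
    exact ⟨i, S, hcard, hmono, hW.mono hSW⟩

/-- Support-disjointness Ramsey theorem, one-universal case: atoms `A` with `|A| = r`,
supports `σ v ⊆ A`, adjacency = support disjointness, every singleton occurs as a
support and exactly one vertex has empty support.  For demands `k i ≥ 2` with
`M = ∑ (k i - 1)`, every `c`-coloring forces a monochromatic `k i`-clique in some
color iff `r ≥ M`. -/
theorem support_disjointness_ramsey_one_universal {α V : Type*} [DecidableEq V]
    (A : Finset α) (r : ℕ) (hr : A.card = r) (σ : V → Finset α)
    (hσA : ∀ v, σ v ⊆ A) (hsing : ∀ a ∈ A, ∃ v, σ v = {a})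
    (huniv : ∃! v, σ v = ∅)
    (c : ℕ) (hc : 1 ≤ c) (k : Fin c → ℕ) (hk : ∀ i, 2 ≤ k i) :
    (∀ χ : V → Fin c, ∃ i : Fin c, ∃ S : Finset V, S.card = k i ∧
      (∀ v ∈ S, χ v = i) ∧
      (S : Set V).Pairwise fun u v => Disjoint (σ u) (σ v)) ↔
    ∑ i, (k i - 1) ≤ r :=
  support_disjointness_ramsey_one_universal_general A r hr σ hσA hsing huniv c k hk
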